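/- arXiv:1910.07216 — 9 statements merged into one kernel-verified Lean document; each statement's English description precedes it below -/
import Mathlib

section
/- Let f, g be elements of the maximal ideal 𝔪 of R = ℂ⟦x,y⟧, both nonzero, and assume the quotient R/(f,g) is a finite-dimensional ℂ-vector space. Then I(f,g) ≥ m(f)·m(g), i.e., the intersection number of the two plane curve singularities is at least the product of their multiplicities. -/
/-!
Let `m = m(f)` and `n = m(g)` and let `I_k` be the ideal of power series of order `≥ k`, so
that `f ∈ I_m`, `g ∈ I_n` and `R ⧸ I_k` has dimension `k(k+1)/2`, the number of monomials of
degree `< k`. Modulo `I_{m+n}`, the ideal `(f, g)` is the image of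
`(a, b) ↦ f a + g b`, which factors through `R ⧸ I_n × R ⧸ I_m`. Hence
`dim R ⧸ (f, g) ≥ dim R ⧸ (I_{m+n} + (f, g)) ≥ dim R ⧸ I_{m+n} - dim R ⧸ I_n - dim R ⧸ I_m`,
and the right-hand side is `(m+n)(m+n+1)/2 - m(m+1)/2 - n(n+1)/2 = mn`.
-/

local notation "R" => MvPowerSeries (Fin 2) ℂ

/-- The intersection number of two plane curve singularities defined by `f` and `g`. -/
noncomputable def interNum (f g : R) : ℕ :=
  Module.finrank ℂ (R ⧸ Ideal.span {f, g})

/-- The multiplicity of a plane curve singularity defined by `f`: the largest `n`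
with `f ∈ 𝔪 ^ n`. -/
noncomputable def mult (f : R) : ℕ :=
  sSup {n : ℕ | f ∈ (IsLocalRing.maximalIdeal R) ^ n}

open Module Finset

theorem Ideal.finrank_quotient_le_finrank_quotient_span_pair_add {k A : Type*} [Field k]
    [CommRing A] [Algebra k A] {I P Q : Ideal A} {f g : A}
    (hP : ∀ a ∈ P, f * a ∈ I) (hQ : ∀ b ∈ Q, g * b ∈ I)
    [FiniteDimensional k (A ⧸ I)] [FiniteDimensional k (A ⧸ Ideal.span {f, g})]
    [FiniteDimensional k (A ⧸ P)] [FiniteDimensional k (A ⧸ Q)] :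
    finrank k (A ⧸ I) ≤
      finrank k (A ⧸ Ideal.span {f, g}) + finrank k (A ⧸ P) + finrank k (A ⧸ Q) := by
  set J := Ideal.span {f, g}
  let ψ : ((A ⧸ P) × (A ⧸ Q)) →ₗ[A] A ⧸ I :=
    (P.mapQ I (LinearMap.mulLeft A f) hP).coprod (Q.mapQ I (LinearMap.mulLeft A g) hQ)
  let π : A ⧸ I →ₗ[k] A ⧸ (I ⊔ J) := (Ideal.Quotient.factorₐ k le_sup_left).toLinearMap
  have ker_le_range : LinearMap.ker π ≤ (LinearMap.range ψ).restrictScalars k := by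
    intro x hx
    obtain ⟨a, rfl⟩ := Ideal.Quotient.mk_surjective x
    obtain ⟨i, hi, j, hj, rfl⟩ := Submodule.mem_sup.mp (Ideal.Quotient.eq_zero_iff_mem.mp hx)
    obtain ⟨u, v, rfl⟩ := Ideal.mem_span_pair.mp hj
    refine ⟨(Submodule.Quotient.mk u, Submodule.Quotient.mk v), ?_⟩
    rw [map_add, Ideal.Quotient.eq_zero_iff_mem.mpr hi, zero_add]
    show Submodule.Quotient.mk (f * u) + Submodule.Quotient.mk (g * v) =
      Ideal.Quotient.mk I (u * f + v * g)
    rw [← Submodule.Quotient.mk_add, mul_comm f, mul_comm g]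
    rfl
  have finrank_range_le : finrank k (LinearMap.range π) ≤ finrank k (A ⧸ J) := by
    rw [LinearMap.range_eq_top.mpr (Ideal.Quotient.factor_surjective le_sup_left), finrank_top]
    exact LinearMap.finrank_le_finrank_of_surjective
      (f := (Ideal.Quotient.factorₐ k (le_sup_right : J ≤ I ⊔ J)).toLinearMap)
      (Ideal.Quotient.factor_surjective le_sup_right)
  calc finrank k (A ⧸ I) = finrank k (LinearMap.range π) + finrank k (LinearMap.ker π) :=
        π.finrank_range_add_finrank_ker.symm
    _ ≤ finrank k (A ⧸ J) + finrank k ((A ⧸ P) × (A ⧸ Q)) := by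
        gcongr
        calc finrank k (LinearMap.ker π) ≤ finrank k ((LinearMap.range ψ).restrictScalars k) :=
              Submodule.finrank_mono ker_le_range
          _ ≤ _ := (ψ.restrictScalars k).finrank_range_le
    _ = _ := by rw [finrank_prod, add_assoc]

namespace Finsupp

theorem ncard_degree_lt {σ : Type*} [Fintype σ] [DecidableEq σ] (n : ℕ) :
    {d : σ →₀ ℕ | d.degree < n}.ncard = ∑ j ∈ range n, (Fintype.card σ + j - 1).choose j := by
  have hset : {d : σ →₀ ℕ | d.degree < n} =
      ↑((range n).biUnion fun j ↦ (univ : Finset σ).finsuppAntidiag j) := by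
    ext d
    simp [degree_eq_sum]
  rw [hset, Set.ncard_coe_finset, card_biUnion]
  · simp only [card_finsuppAntidiag_nat_eq_choose, card_univ]
  · intro i _ j _ hij
    simp only [Function.onFun, disjoint_left, mem_finsuppAntidiag]
    rintro d ⟨rfl, -⟩ ⟨h, -⟩
    exact hij h

theorem two_mul_ncard_degree_lt_fin_two (n : ℕ) :
    2 * {d : Fin 2 →₀ ℕ | d.degree < n}.ncard = n * (n + 1) := by
  simp only [ncard_degree_lt, Fintype.card_fin, show ∀ j, 2 + j - 1 = j + 1 by omega,
    Nat.choose_succ_self_right]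
  induction n with
  | zero => rfl
  | succ n ih =>
    rw [sum_range_succ, mul_add, ih]
    ring

theorem ncard_degree_lt_add_fin_two (m n : ℕ) :
    {d : Fin 2 →₀ ℕ | d.degree < m + n}.ncard =
      {d : Fin 2 →₀ ℕ | d.degree < m}.ncard + {d : Fin 2 →₀ ℕ | d.degree < n}.ncard + m * n := by
  apply Nat.eq_of_mul_eq_mul_left two_pos
  rw [mul_add, mul_add, two_mul_ncard_degree_lt_fin_two, two_mul_ncard_degree_lt_fin_two,
    two_mul_ncard_degree_lt_fin_two]
  ring

end Finsupp

namespace MvPowerSeries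

variable {σ : Type*}

section CommSemiring

variable {S : Type*} [CommSemiring S]

variable (σ S) in
noncomputable def orderIdeal (n : ℕ) : Ideal (MvPowerSeries σ S) where
  carrier := {f | n ≤ f.order}
  zero_mem' := by simp
  add_mem' hf hg := (le_min hf hg).trans min_order_le_add
  smul_mem' _ _ hf := hf.trans (le_add_self.trans le_order_mul)

theorem mem_orderIdeal {n : ℕ} {f : MvPowerSeries σ S} : f ∈ orderIdeal σ S n ↔ n ≤ f.order :=
  Iff.rfl

theorem mul_mem_orderIdeal {m n : ℕ} {f g : MvPowerSeries σ S} (hf : f ∈ orderIdeal σ S m)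
    (hg : g ∈ orderIdeal σ S n) : f * g ∈ orderIdeal σ S (m + n) := by
  rw [mem_orderIdeal, Nat.cast_add]
  exact (add_le_add hf hg).trans le_order_mul

end CommSemiring

variable {k : Type*} [Field k]

theorem pow_maximalIdeal_le_orderIdeal (n : ℕ) :
    IsLocalRing.maximalIdeal (MvPowerSeries σ k) ^ n ≤ orderIdeal σ k n := by
  induction n with
  | zero => simp [orderIdeal]
  | succ n ih =>
    rw [pow_succ]
    refine Ideal.mul_le.mpr fun f hf g hg ↦ mul_mem_orderIdeal (ih hf) ?_
    rw [mem_orderIdeal, Nat.cast_one, one_le_order_iff_constCoeff_eq_zero]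
    by_contra h
    exact (IsLocalRing.mem_maximalIdeal g).mp hg (isUnit_iff_constantCoeff.mpr (Ne.isUnit h))

noncomputable def lowCoeffs (n : ℕ) :
    MvPowerSeries σ k →ₗ[k] ({d : σ →₀ ℕ | d.degree < n} → k) :=
  LinearMap.pi fun d ↦ coeff d.1

theorem ker_lowCoeffs (n : ℕ) :
    LinearMap.ker (lowCoeffs (σ := σ) (k := k) n) = (orderIdeal σ k n).restrictScalars k := by
  ext f
  simp only [LinearMap.mem_ker, Submodule.restrictScalars_mem, mem_orderIdeal, funext_iff]
  exact ⟨fun h ↦ le_order fun d hd ↦ h ⟨d, by exact_mod_cast hd⟩,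
    fun h d ↦ coeff_of_lt_order (lt_of_lt_of_le (by exact_mod_cast d.2) h)⟩

theorem lowCoeffs_surjective (n : ℕ) : Function.Surjective (lowCoeffs (σ := σ) (k := k) n) := by
  intro v
  let f : MvPowerSeries σ k := fun d ↦ if h : d.degree < n then v ⟨d, h⟩ else 0
  exact ⟨f, funext fun d ↦ dif_pos d.2⟩

noncomputable def quotientOrderIdealEquiv (n : ℕ) :
    (MvPowerSeries σ k ⧸ orderIdeal σ k n) ≃ₗ[k] ({d : σ →₀ ℕ | d.degree < n} → k) :=
  (Submodule.Quotient.restrictScalarsEquiv k (orderIdeal σ k n)).symm.trans <|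
    (Submodule.quotEquivOfEq _ _ (ker_lowCoeffs n).symm).trans <|
      (lowCoeffs n).quotKerEquivOfSurjective (lowCoeffs_surjective n)

variable [Finite σ]

instance (n : ℕ) : FiniteDimensional k (MvPowerSeries σ k ⧸ orderIdeal σ k n) :=
  have := (Finsupp.finite_of_degree_lt (σ := σ) n).to_subtype
  Module.Finite.equiv (quotientOrderIdealEquiv n).symm

theorem finrank_quotient_orderIdeal (n : ℕ) :
    finrank k (MvPowerSeries σ k ⧸ orderIdeal σ k n) = {d : σ →₀ ℕ | d.degree < n}.ncard := by
  have := (Finsupp.finite_of_degree_lt (σ := σ) n).fintype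
  rw [(quotientOrderIdealEquiv n).finrank_eq, finrank_pi, Fintype.card_eq_nat_card,
    Nat.card_coe_set_eq]

end MvPowerSeries

open MvPowerSeries

theorem mem_maximalIdeal_pow_mult (f : R) : f ∈ IsLocalRing.maximalIdeal R ^ mult f := by
  rcases eq_or_ne f 0 with rfl | hf
  · exact zero_mem _
  have bdd : BddAbove {n : ℕ | f ∈ IsLocalRing.maximalIdeal R ^ n} := by
    refine ⟨f.order.toNat, fun n hn ↦ ?_⟩
    have hn : (n : ℕ∞) ≤ f.order := pow_maximalIdeal_le_orderIdeal n hn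
    rw [← ne_zero_iff_order_finite.mp hf] at hn
    exact_mod_cast hn
  exact Nat.sSup_mem ⟨0, by simp⟩ bdd

theorem stmt3_general (f g : R)
    (Hfg : FiniteDimensional ℂ (R ⧸ Ideal.span {f, g})) :
    mult f * mult g ≤ interNum f g := by
  have hf : f ∈ orderIdeal (Fin 2) ℂ (mult f) :=
    pow_maximalIdeal_le_orderIdeal _ (mem_maximalIdeal_pow_mult f)
  have hg : g ∈ orderIdeal (Fin 2) ℂ (mult g) :=
    pow_maximalIdeal_le_orderIdeal _ (mem_maximalIdeal_pow_mult g)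
  have key := Ideal.finrank_quotient_le_finrank_quotient_span_pair_add (k := ℂ)
    (I := orderIdeal (Fin 2) ℂ (mult f + mult g))
    (fun a ha ↦ mul_mem_orderIdeal hf ha)
    (fun b hb ↦ add_comm (mult g) (mult f) ▸ mul_mem_orderIdeal hg hb)
  rw [finrank_quotient_orderIdeal, finrank_quotient_orderIdeal, finrank_quotient_orderIdeal,
    Finsupp.ncard_degree_lt_add_fin_two] at key
  unfold interNum
  omega

/-- The intersection number of two plane curve singularities is at least the product
of their multiplicities. -/
theorem stmt3 (f g : R) (hf : f ≠ 0) (hg : g ≠ 0)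
    (hfm : f ∈ IsLocalRing.maximalIdeal R)
    (hgm : g ∈ IsLocalRing.maximalIdeal R)
    (Hfg : FiniteDimensional ℂ (R ⧸ Ideal.span {f, g})) :
    mult f * mult g ≤ interNum f g :=
  stmt3_general f g Hfg
end

section
/- Let A be a ℂ-subalgebra of the formal power series ring ℂ⟦t⟧ (Mathlib: PowerSeries ℂ) such that the quotient ℂ-vector space ℂ⟦t⟧ / A (quotient of ℂ-modules by the underlying submodule of A) is finite-dimensional. Then for every nonzero g ∈ A, the quotient ring A / (g·A) is a finite-dimensional ℂ-vector space whose dimension equals the t-adic order of g viewed as a power series: finrank ℂ (A ⧸ Ideal.span {g}) = ord_t(g). -/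
/-!
Compare `A` and `ℂ⟦t⟧` through the square formed by the inclusion `ι : A → ℂ⟦t⟧` and
multiplication by `g` on both sides. Since `g ∘ ι = ι ∘ g` and both `ι` and multiplication by `g`
on `ℂ⟦t⟧` are injective, computing the length of `ℂ⟦t⟧ / g A` along both factorizations gives
`ℓ(A / g A) + ℓ(ℂ⟦t⟧ / A) = ℓ(ℂ⟦t⟧ / A) + ℓ(ℂ⟦t⟧ / g ℂ⟦t⟧)`, and `ℓ(ℂ⟦t⟧ / A)` is finite.
Finally `g` is a unit times `t ^ ord g`, and `ℂ⟦t⟧ / t ^ n` has the first `n` coefficients as a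
basis.
Lengths over `ℂ` are just dimensions, but they take values in `ℕ∞` and are additive on all short
exact sequences, so no finiteness has to be tracked until the end.
-/

open Submodule LinearMap

section Cokernel

variable {R X Y Z : Type*} [Ring R] [AddCommGroup X] [AddCommGroup Y] [AddCommGroup Z]
  [Module R X] [Module R Y] [Module R Z]

theorem Module.length_cokernel_comp (a : X →ₗ[R] Y) {b : Y →ₗ[R] Z}
    (hb : Function.Injective b) :
    Module.length R (Z ⧸ range (b ∘ₗ a)) =
      Module.length R (Y ⧸ range a) + Module.length R (Z ⧸ range b) := by
  have hab : range a ≤ (range (b ∘ₗ a)).comap b := by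
    rintro _ ⟨x, rfl⟩; exact ⟨x, rfl⟩
  have hrange : range (b ∘ₗ a) ≤ range b := range_comp_le_range a b
  refine Module.length_eq_add_of_exact ((range a).mapQ _ b hab) (factor hrange) ?_
    (factor_surjective hrange) ?_
  · rw [← ker_eq_bot, ker_mapQ, eq_bot_iff]
    rintro _ ⟨y, ⟨x, hx⟩, rfl⟩
    rw [Submodule.mem_bot, mkQ_apply, Quotient.mk_eq_zero]
    exact ⟨x, hb hx⟩
  · intro z
    induction z using Quotient.induction_on with | _ z => ?_
    rw [← mkQ_apply, factor_mk, mkQ_apply, Quotient.mk_eq_zero]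
    constructor
    · rintro ⟨y, rfl⟩
      exact ⟨Submodule.Quotient.mk y, rfl⟩
    · rintro ⟨y, hy⟩
      induction y using Quotient.induction_on with | _ y => ?_
      obtain ⟨x, hx⟩ := (Submodule.Quotient.eq _).mp hy
      exact ⟨y - a x, by rw [map_sub, ← comp_apply, hx, sub_sub_cancel]⟩

variable {W : Type*} [AddCommGroup W] [Module R W]

theorem Module.length_cokernel_add_length_cokernel_of_comp_eq {f : X →ₗ[R] Y} {g : Z →ₗ[R] W}
    {ι : X →ₗ[R] Z} {ι' : Y →ₗ[R] W} (hι' : Function.Injective ι') (hg : Function.Injective g)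
    (hcomm : ι' ∘ₗ f = g ∘ₗ ι) :
    Module.length R (Y ⧸ range f) + Module.length R (W ⧸ range ι') =
      Module.length R (Z ⧸ range ι) + Module.length R (W ⧸ range g) := by
  rw [← Module.length_cokernel_comp f hι', ← Module.length_cokernel_comp ι hg, hcomm]

end Cokernel

theorem Ideal.length_quotient_span_singleton (K : Type*) {S : Type*} [CommRing K] [CommRing S]
    [Algebra K S] (s : S) :
    Module.length K (S ⧸ Ideal.span {s}) = Module.length K (S ⧸ range (mulRight K s)) := by
  have hspan : (Ideal.span {s}).restrictScalars K = range (mulRight K s) := by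
    ext x
    simp [Ideal.mem_span_singleton']
  rw [← hspan, (Quotient.restrictScalarsEquiv K _).length_eq]

theorem Subalgebra.length_quotient_span_singleton {K S : Type*} [CommRing K] [CommRing S]
    [Algebra K S] (A : Subalgebra K S)
    (hA : Module.length K (S ⧸ Subalgebra.toSubmodule A) ≠ ⊤) (g : A)
    (hg : (g : S) ∈ nonZeroDivisors S) :
    Module.length K (A ⧸ Ideal.span {g}) = Module.length K (S ⧸ Ideal.span {(g : S)}) := by
  have hrangeA : range A.val.toLinearMap = Subalgebra.toSubmodule A := by
    ext x
    simp
  have key := Module.length_cokernel_add_length_cokernel_of_comp_eq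
    (f := mulRight K g) (g := mulRight K (g : S)) (ι := A.val.toLinearMap)
    (ι' := A.val.toLinearMap)
    Subtype.val_injective (isRegular_iff_mem_nonZeroDivisors.mpr hg).right (by ext; rfl)
  rw [hrangeA, add_comm] at key
  rw [Ideal.length_quotient_span_singleton, Ideal.length_quotient_span_singleton]
  exact WithTop.add_left_cancel hA key

namespace PowerSeries

variable {k : Type*} [Field k]

theorem length_quotient_span_X_pow (n : ℕ) :
    Module.length k (k⟦X⟧ ⧸ Ideal.span {(X : k⟦X⟧) ^ n}) = n := by
  let coeffs : k⟦X⟧ →ₗ[k] Fin n → k := LinearMap.pi fun i ↦ coeff (i : ℕ)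
  have hsurj : Function.Surjective coeffs := fun c ↦
    ⟨mk fun i ↦ if h : i < n then c ⟨i, h⟩ else 0, funext fun i ↦ by simp [coeffs]⟩
  have hker : ker coeffs = (Ideal.span {(X : k⟦X⟧) ^ n}).restrictScalars k := by
    ext f
    simp [coeffs, Ideal.mem_span_singleton, X_pow_dvd_iff, funext_iff, Fin.forall_iff]
  rw [← (Quotient.restrictScalarsEquiv k _).length_eq, ← hker,
    (coeffs.quotKerEquivOfSurjective hsurj).length_eq, Module.length_eq_finrank,
    Module.finrank_fin_fun]

theorem length_quotient_span_singleton {f : k⟦X⟧} (hf : f ≠ 0) :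
    Module.length k (k⟦X⟧ ⧸ Ideal.span {f}) = f.order := by
  have hspan : Ideal.span {f} = Ideal.span {X ^ f.order.toNat} := by
    conv_lhs => rw [← X_pow_order_mul_divXPowOrder (f := f)]
    exact Ideal.span_singleton_mul_right_unit (isUnit_divided_by_X_pow_order hf) _
  rw [hspan, length_quotient_span_X_pow, ENat.natCast_toNat (order_finite_iff_ne_zero.mpr hf).ne]

end PowerSeries

/-- For a `ℂ`-subalgebra `A` of `ℂ⟦t⟧` of finite colength, the quotient of `A` by the
principal ideal generated by a nonzero `g ∈ A` is a finite-dimensional `ℂ`-vector space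
of dimension the `t`-adic order of `g`. -/
theorem stmt4 (A : Subalgebra ℂ (PowerSeries ℂ))
    (hA : FiniteDimensional ℂ (PowerSeries ℂ ⧸ Subalgebra.toSubmodule A))
    (g : A) (hg : g ≠ 0) :
    FiniteDimensional ℂ (A ⧸ Ideal.span {g}) ∧
      (Module.finrank ℂ (A ⧸ Ideal.span {g}) : ℕ∞) =
        PowerSeries.order (g : PowerSeries ℂ) := by
  have hg' : (g : PowerSeries ℂ) ≠ 0 := fun h ↦ hg (Subtype.ext h)
  have hlength :
      Module.length ℂ (A ⧸ Ideal.span {g}) = PowerSeries.order (g : PowerSeries ℂ) := by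
    have hAfin : Module.length ℂ (PowerSeries ℂ ⧸ Subalgebra.toSubmodule A) ≠ ⊤ := by
      rw [Module.length_eq_finrank]
      exact ENat.natCast_ne_top _
    rw [A.length_quotient_span_singleton hAfin g (mem_nonZeroDivisors_of_ne_zero hg'),
      PowerSeries.length_quotient_span_singleton hg']
  have : IsNoetherian ℂ (A ⧸ Ideal.span {g}) :=
    (isFiniteLength_iff_isNoetherian_isArtinian.mp <| Module.length_ne_top_iff.mp <|
      hlength ▸ (PowerSeries.order_finite_iff_ne_zero.mpr hg').ne).1
  exact ⟨inferInstance, by rw [← Module.length_eq_finrank, hlength]⟩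
end

section
/- Let (M,d) be an ultrametric space. If x, y ∈ M, r, s ≥ 0, the closed ball B₁ = closedBall x r is contained in the closed ball B₂ = closedBall y s, and B₁ ≠ B₂, then the diameter of B₁ is strictly smaller than the diameter of B₂: Metric.diam B₁ < Metric.diam B₂. (In particular, in an ultrametric space every nonempty closed ball B equals the closed ball of radius diam B centered at any of its points.) -/
open Metric

namespace IsUltrametricDist

variable {X : Type*} [PseudoMetricSpace X] [IsUltrametricDist X]

lemma diam_closedBall_le {x : X} {r : ℝ} (hr : 0 ≤ r) : diam (closedBall x r) ≤ r :=
  diam_le_of_forall_dist_le hr fun _ hp _ hq =>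
    (dist_triangle_max _ x _).trans (max_le hp (mem_closedBall'.mp hq))

lemma diam_closedBall_lt_diam_of_ssubset {x : X} {r : ℝ} {s : Set X} (hr : 0 ≤ r)
    (hs : Bornology.IsBounded s) (hsub : closedBall x r ⊂ s) : diam (closedBall x r) < diam s := by
  obtain ⟨z, hzs, hz⟩ := Set.exists_of_ssubset hsub
  calc diam (closedBall x r) ≤ r := diam_closedBall_le hr
    _ < dist z x := not_le.mp hz
    _ ≤ diam s := dist_le_diam_of_mem hs hzs (hsub.subset (mem_closedBall_self hr))

end IsUltrametricDist

theorem stmt10_general (M : Type*) [MetricSpace M]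
    (hu : ∀ x y z : M, dist x z ≤ max (dist x y) (dist y z))
    (x y : M) (r s : ℝ) (hr : 0 ≤ r)
    (hsub : Metric.closedBall x r ⊆ Metric.closedBall y s)
    (hne : Metric.closedBall x r ≠ Metric.closedBall y s) :
    Metric.diam (Metric.closedBall x r) < Metric.diam (Metric.closedBall y s) :=
  haveI : IsUltrametricDist M := ⟨hu⟩
  IsUltrametricDist.diam_closedBall_lt_diam_of_ssubset hr isBounded_closedBall
    (hsub.ssubset_of_ne hne)

/-- In an ultrametric space, the diameter is strictly monotone on the poset of
closed balls (of nonnegative radii). -/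
theorem stmt10 (M : Type*) [MetricSpace M]
    (hu : ∀ x y z : M, dist x z ≤ max (dist x y) (dist y z))
    (x y : M) (r s : ℝ) (hr : 0 ≤ r) (hs : 0 ≤ s)
    (hsub : Metric.closedBall x r ⊆ Metric.closedBall y s)
    (hne : Metric.closedBall x r ≠ Metric.closedBall y s) :
    Metric.diam (Metric.closedBall x r) < Metric.diam (Metric.closedBall y s) :=
  stmt10_general M hu x y r s hr hsub hne
end

section
/- Let M be a finite nonempty set and let H be a hierarchy on M. Consider the simple graph whose vertex set is H, two distinct members A, B ∈ H being adjacent if and only if one covers the other in the inclusion order on H (i.e., A ⊊ B and no C ∈ H satisfies A ⊊ C ⊊ B, or symmetrically). Then this graph is a tree (connected and acyclic). -/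
/-!
Every member of a hierarchy is nonempty, so the members containing a fixed member pairwise
intersect and hence form a chain. In a partial order whose up-sets `Ici a` are chains, two upper
covers of the same element coincide; so after deleting a Hasse edge `a ⋖ b`, the down-set of `a`
is closed under adjacency and `b` is no longer reachable from `a`: every edge is a bridge.
Connectedness holds because, in a finite order, every element is joined to the top by covers.
-/

open Relation Set

theorem CovBy.eq_of_covBy_of_le {α : Type*} [PartialOrder α] {a b c : α}
    (hab : a ⋖ b) (hac : a ⋖ c) (hbc : b ≤ c) : b = c :=
  (hac.eq_or_eq hab.le hbc).resolve_left hab.ne'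

theorem Subtype.covBy_iff {α : Type*} [Preorder α] {s : Set α} {a b : s} :
    a ⋖ b ↔ (a : α) < b ∧ ¬ ∃ c ∈ s, (a : α) < c ∧ c < b := by
  simp [CovBy, Subtype.forall, ← Subtype.coe_lt_coe]

namespace SimpleGraph

variable {α : Type*} [PartialOrder α]

theorem fromRel_covBy : fromRel (· ⋖ · : α → α → Prop) = hasse α := by
  ext a b
  simp only [fromRel_adj, hasse_adj, and_iff_right_iff_imp]
  rintro (h | h)
  exacts [h.ne, h.ne']

theorem hasse_reachable_of_le [LocallyFiniteOrder α] {a b : α} (hab : a ≤ b) :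
    (hasse α).Reachable a b := by
  rw [reachable_iff_reflTransGen]
  exact ReflTransGen.mono (fun _ _ h => Or.inl h) _ _ (le_iff_reflTransGen_covBy.mp hab)

theorem hasse_connected_of_isTop [LocallyFiniteOrder α] {t : α} (ht : IsTop t) :
    (hasse α).Connected := by
  have : Nonempty α := ⟨t⟩
  exact ⟨fun a b => (hasse_reachable_of_le (ht a)).trans (hasse_reachable_of_le (ht b)).symm⟩

section ChainIci

variable (hIci : ∀ a : α, IsChain (· ≤ ·) (Ici a))
include hIci

theorem le_of_adj_deleteEdges_of_covBy {a b u v : α} (hab : a ⋖ b)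
    (huv : ((hasse α).deleteEdges {s(a, b)}).Adj u v) (hua : u ≤ a) : v ≤ a := by
  obtain ⟨huv | hvu, hne⟩ := huv
  · rcases (hIci u).total huv.le hua with hva | hav
    · exact hva
    rcases huv.eq_or_eq hua hav with rfl | rfl
    · have hvb : v = b := by
        rcases (hIci a).total huv.le hab.le with hvb | hbv
        exacts [huv.eq_of_covBy_of_le hab hvb, (hab.eq_of_covBy_of_le huv hbv).symm]
      exact (hne (by simp [hvb, hab.ne])).elim
    · exact le_rfl
  · exact hvu.le.trans hua

theorem le_of_reachable_deleteEdges_of_covBy {a b v : α} (hab : a ⋖ b)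
    (hv : ((hasse α).deleteEdges {s(a, b)}).Reachable a v) : v ≤ a := by
  rw [reachable_iff_reflTransGen] at hv
  induction hv with
  | refl => exact le_rfl
  | tail _ hadj ih => exact le_of_adj_deleteEdges_of_covBy hIci hab hadj ih

theorem hasse_isBridge_of_covBy {a b : α} (hab : a ⋖ b) : (hasse α).IsBridge s(a, b) :=
  isBridge_iff.mpr fun hreach =>
    hab.lt.not_ge (le_of_reachable_deleteEdges_of_covBy hIci hab hreach)

theorem hasse_isAcyclic_of_isChain_Ici : (hasse α).IsAcyclic := by
  refine isAcyclic_iff_forall_adj_isBridge.mpr fun a b hab => ?_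
  rcases hab with hab | hba
  · exact hasse_isBridge_of_covBy hIci hab
  · exact Sym2.eq_swap ▸ hasse_isBridge_of_covBy hIci hba

theorem hasse_isTree [LocallyFiniteOrder α] {t : α} (ht : IsTop t) : (hasse α).IsTree :=
  ⟨hasse_connected_of_isTop ht, hasse_isAcyclic_of_isChain_Ici hIci⟩

end ChainIci

end SimpleGraph

theorem isChain_Ici_of_laminar {M : Type*} {H : Set (Set M)} (hempty : ∅ ∉ H)
    (hlam : ∀ A ∈ H, ∀ B ∈ H, A ∩ B = ∅ ∨ A ⊆ B ∨ B ⊆ A) (A : H) :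
    IsChain (· ≤ ·) (Ici A) := by
  intro B hAB C hAC _
  rcases hlam B B.2 C C.2 with hBC | hBC | hCB
  · refine absurd ?_ hempty
    rw [← subset_empty_iff.mp (hBC ▸ subset_inter hAB hAC)]
    exact A.2
  · exact Or.inl hBC
  · exact Or.inr hCB

theorem stmt11_general (M : Type*) [Finite M] (H : Set (Set M))
    (h1 : ∅ ∉ H) (h3 : Set.univ ∈ H)
    (h4 : ∀ A ∈ H, ∀ B ∈ H, A ∩ B = ∅ ∨ A ⊆ B ∨ B ⊆ A) :
    (SimpleGraph.fromRel (fun A B : H =>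
      (A : Set M) ⊂ B ∧ ¬ ∃ C ∈ H, (A : Set M) ⊂ C ∧ C ⊂ (B : Set M))).IsTree := by
  classical
  have := Fintype.ofFinite H
  let _ := Fintype.toLocallyFiniteOrder (α := H)
  have hcov : (fun A B : H =>
      (A : Set M) ⊂ B ∧ ¬ ∃ C ∈ H, (A : Set M) ⊂ C ∧ C ⊂ (B : Set M)) = (· ⋖ ·) := by
    ext A B
    exact Subtype.covBy_iff.symm
  rw [hcov, SimpleGraph.fromRel_covBy]
  have htop : IsTop (⟨Set.univ, h3⟩ : H) := fun A => subset_univ (A : Set M)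
  exact SimpleGraph.hasse_isTree (isChain_Ici_of_laminar h1 h4) htop

/-- The Hasse diagram of a hierarchy on a finite nonempty set, viewed as an undirected
simple graph (members adjacent iff one covers the other in the inclusion order), is a
tree. -/
theorem stmt11 (M : Type*) [Finite M] [Nonempty M] (H : Set (Set M))
    (h1 : ∅ ∉ H) (h2 : ∀ a : M, {a} ∈ H) (h3 : Set.univ ∈ H)
    (h4 : ∀ A ∈ H, ∀ B ∈ H, A ∩ B = ∅ ∨ A ⊆ B ∨ B ⊆ A) :
    (SimpleGraph.fromRel (fun A B : H =>
      (A : Set M) ⊂ B ∧ ¬ ∃ C ∈ H, (A : Set M) ⊂ C ∧ C ⊂ (B : Set M))).IsTree :=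
  stmt11_general M H h1 h3 h4
end

section
/- Let M be a finite nonempty set, H a hierarchy on M, and λ : Set M → ℝ a function which is strictly monotone on H with respect to strict inclusion (for all A, B ∈ H, A ⊊ B implies λ(A) < λ(B)) and which vanishes on singletons (λ({a}) = 0 for all a ∈ M). Define d(a,b) as the minimum of λ(B) over all B ∈ H containing both a and b. Then d is an ultrametric on M: d(a,a) = 0, d(a,b) = d(b,a), d(a,b) > 0 whenever a ≠ b, and d(a,c) ≤ max(d(a,b), d(b,c)) for all a, b, c ∈ M. -/
/-!
Since `H` is finite and contains `univ`, the infimum defining `d a b` is attained by some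
`B ∈ H` containing `a` and `b`. Such a `B` contains `{a}`, so monotonicity gives `d a b ≥ 0`,
with strict inequality when `b ≠ a`. For the ultrametric inequality, the minimizers for
`(a, b)` and `(b, c)` share `b`, so one contains the other, and the larger one contains
both `a` and `c`.
-/

namespace Hierarchy

variable {M : Type*} {H : Set (Set M)} {lam : Set M → ℝ} {a b : M}

noncomputable def hierarchyDist (H : Set (Set M)) (lam : Set M → ℝ) (a b : M) : ℝ :=
  sInf (lam '' {B | B ∈ H ∧ a ∈ B ∧ b ∈ B})

theorem hierarchyDist_comm (a b : M) : hierarchyDist H lam a b = hierarchyDist H lam b a := by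
  simp only [hierarchyDist, and_comm (a := a ∈ _)]

variable [Finite M]

theorem hierarchyDist_le {C : Set M} (hC : C ∈ H) (ha : a ∈ C) (hb : b ∈ C) :
    hierarchyDist H lam a b ≤ lam C :=
  csInf_le (Set.toFinite _).bddBelow ⟨C, ⟨hC, ha, hb⟩, rfl⟩

theorem exists_mem_lam_eq_hierarchyDist (huniv : Set.univ ∈ H) (a b : M) :
    ∃ B ∈ H, a ∈ B ∧ b ∈ B ∧ lam B = hierarchyDist H lam a b := by
  have hne : (lam '' {B | B ∈ H ∧ a ∈ B ∧ b ∈ B}).Nonempty :=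
    ⟨lam Set.univ, Set.univ, ⟨huniv, trivial, trivial⟩, rfl⟩
  obtain ⟨B, ⟨hB, ha, hb⟩, hlB⟩ := hne.csInf_mem (Set.toFinite _)
  exact ⟨B, hB, ha, hb, hlB⟩

theorem hierarchyDist_le_max (huniv : Set.univ ∈ H)
    (hlaminar : ∀ A ∈ H, ∀ B ∈ H, A ∩ B = ∅ ∨ A ⊆ B ∨ B ⊆ A) (a b c : M) :
    hierarchyDist H lam a c ≤ max (hierarchyDist H lam a b) (hierarchyDist H lam b c) := by
  obtain ⟨B₁, hB₁, ha₁, hb₁, hl₁⟩ := exists_mem_lam_eq_hierarchyDist (lam := lam) huniv a b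
  obtain ⟨B₂, hB₂, hb₂, hc₂, hl₂⟩ := exists_mem_lam_eq_hierarchyDist (lam := lam) huniv b c
  rcases hlaminar B₁ hB₁ B₂ hB₂ with hdisj | h₁₂ | h₂₁
  · exact absurd (hdisj ▸ ⟨hb₁, hb₂⟩ : b ∈ (∅ : Set M)) (Set.notMem_empty b)
  · exact (hierarchyDist_le hB₂ (h₁₂ ha₁) hc₂).trans (hl₂.trans_le (le_max_right _ _))
  · exact (hierarchyDist_le hB₁ ha₁ (h₂₁ hc₂)).trans (hl₁.trans_le (le_max_left _ _))

variable (hsingleton_mem : ∀ a : M, {a} ∈ H) (huniv : Set.univ ∈ H) (hmono : StrictMonoOn lam H)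
  (hlam_singleton : ∀ a : M, lam {a} = 0)
include hsingleton_mem huniv hmono hlam_singleton

theorem hierarchyDist_nonneg (a b : M) : 0 ≤ hierarchyDist H lam a b := by
  obtain ⟨B, hB, ha, -, hlB⟩ := exists_mem_lam_eq_hierarchyDist (lam := lam) huniv a b
  rw [← hlB, ← hlam_singleton a]
  exact hmono.monotoneOn (hsingleton_mem a) hB (Set.singleton_subset_iff.mpr ha)

theorem hierarchyDist_self (a : M) : hierarchyDist H lam a a = 0 :=
  le_antisymm ((hierarchyDist_le (hsingleton_mem a) rfl rfl).trans_eq (hlam_singleton a))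
    (hierarchyDist_nonneg hsingleton_mem huniv hmono hlam_singleton a a)

theorem hierarchyDist_pos (hab : a ≠ b) : 0 < hierarchyDist H lam a b := by
  obtain ⟨B, hB, ha, hb, hlB⟩ := exists_mem_lam_eq_hierarchyDist (lam := lam) huniv a b
  have hssub : {a} ⊂ B :=
    Set.ssubset_iff_subset_ne.mpr ⟨Set.singleton_subset_iff.mpr ha,
      fun h => hab (Set.mem_singleton_iff.mp (h ▸ hb)).symm⟩
  rw [← hlB, ← hlam_singleton a]
  exact hmono (hsingleton_mem a) hB hssub

end Hierarchy

theorem stmt13_general (M : Type*) [Finite M] (H : Set (Set M))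
    (h2 : ∀ a : M, {a} ∈ H) (h3 : Set.univ ∈ H)
    (h4 : ∀ A ∈ H, ∀ B ∈ H, A ∩ B = ∅ ∨ A ⊆ B ∨ B ⊆ A)
    (lam : Set M → ℝ)
    (hmono : ∀ A ∈ H, ∀ B ∈ H, A ⊂ B → lam A < lam B)
    (hsing : ∀ a : M, lam {a} = 0) :
    let d : M → M → ℝ := fun a b => sInf (lam '' {B | B ∈ H ∧ a ∈ B ∧ b ∈ B})
    (∀ a, d a a = 0) ∧ (∀ a b, d a b = d b a) ∧
      (∀ a b, a ≠ b → 0 < d a b) ∧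
      (∀ a b c, d a c ≤ max (d a b) (d b c)) := by
  have hstrict : StrictMonoOn lam H := fun A hA B hB => hmono A hA B hB
  exact ⟨Hierarchy.hierarchyDist_self h2 h3 hstrict hsing, Hierarchy.hierarchyDist_comm,
    fun _ _ => Hierarchy.hierarchyDist_pos h2 h3 hstrict hsing,
    Hierarchy.hierarchyDist_le_max h3 h4⟩

/-- A strictly monotone function on a hierarchy vanishing on singletons induces an
ultrametric, by taking `d a b` to be the smallest value on a member containing both
`a` and `b`. -/
theorem stmt13 (M : Type*) [Finite M] [Nonempty M] (H : Set (Set M))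
    (h1 : ∅ ∉ H) (h2 : ∀ a : M, {a} ∈ H) (h3 : Set.univ ∈ H)
    (h4 : ∀ A ∈ H, ∀ B ∈ H, A ∩ B = ∅ ∨ A ⊆ B ∨ B ⊆ A)
    (lam : Set M → ℝ)
    (hmono : ∀ A ∈ H, ∀ B ∈ H, A ⊂ B → lam A < lam B)
    (hsing : ∀ a : M, lam {a} = 0) :
    let d : M → M → ℝ := fun a b => sInf (lam '' {B | B ∈ H ∧ a ∈ B ∧ b ∈ B})
    (∀ a, d a a = 0) ∧ (∀ a b, d a b = d b a) ∧
      (∀ a b, a ≠ b → 0 < d a b) ∧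
      (∀ a b c, d a c ≤ max (d a b) (d b c)) :=
  stmt13_general M H h2 h3 h4 lam hmono hsing
end

section
/- Let n ≥ 1 and let M be a symmetric real n×n matrix such that: (i) M i j ≥ 0 for all i ≠ j; (ii) there exists a vector a with a i > 0 for all i, (M·a) i ≤ 0 for all i, and (M·a) i₀ < 0 for some index i₀; (iii) the simple graph on the index set in which i and j are adjacent iff i ≠ j and M i j > 0 is connected. Then M is negative definite: for every vector y ≠ 0, yᵀ M y < 0. -/
/-!
Write `y = a * x` coordinatewise. For symmetric `M` the quadratic form then splits as
`∑ i, a i (M a) i x i ^ 2 - ½ ∑ i j, a i M i j a j (x i - x j) ^ 2`. Both parts are `≤ 0`,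
the first because `M a ≤ 0` and the second because the off-diagonal entries of `M` are `≥ 0`.
If the form vanished, the second part would force `x` to be constant along the edges of the
connected graph, hence constant, and the first part, through the strict inequality at `i₀`,
would force that constant to be `0`.
-/

open Matrix

lemma SimpleGraph.Reachable.eq_of_forall_adj {V α : Type*} {G : SimpleGraph V} {f : V → α}
    (h : ∀ u v, G.Adj u v → f u = f v) {u v : V} (huv : G.Reachable u v) : f u = f v := by
  obtain ⟨p⟩ := huv
  induction p with
  | nil => rfl
  | cons hadj _ ih => exact (h _ _ hadj).trans ih

section GroundState

variable {ι : Type*} {M : Matrix ι ι ℝ}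

lemma dotProduct_mulVec_mul_eq_sub [Fintype ι] (hM : M.IsSymm) (a x : ι → ℝ) :
    (a * x) ⬝ᵥ M *ᵥ (a * x) = ∑ i, a i * (M *ᵥ a) i * x i ^ 2
      - (∑ i, ∑ j, a i * M i j * a j * (x i - x j) ^ 2) / 2 := by
  have hswap : ∑ i, ∑ j, a i * M i j * a j * x j ^ 2 = ∑ i, ∑ j, a i * M i j * a j * x i ^ 2 := by
    rw [Finset.sum_comm]
    refine Finset.sum_congr rfl fun i _ => Finset.sum_congr rfl fun j _ => ?_
    rw [hM.apply i j]
    ring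
  have hexpand : ∑ i, ∑ j, a i * M i j * a j * (x i - x j) ^ 2
      = ∑ i, ∑ j, a i * M i j * a j * x i ^ 2 + ∑ i, ∑ j, a i * M i j * a j * x j ^ 2
        - 2 * ∑ i, ∑ j, (a * x) i * M i j * (a * x) j := by
    simp only [← Finset.sum_add_distrib, Finset.mul_sum, ← Finset.sum_sub_distrib, Pi.mul_apply]
    exact Finset.sum_congr rfl fun i _ => Finset.sum_congr rfl fun j _ => by ring
  have hdiag : ∑ i, a i * (M *ᵥ a) i * x i ^ 2 = ∑ i, ∑ j, a i * M i j * a j * x i ^ 2 := by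
    simp only [mulVec, dotProduct, Finset.mul_sum, Finset.sum_mul]
    exact Finset.sum_congr rfl fun i _ => Finset.sum_congr rfl fun j _ => by ring
  have hform : (a * x) ⬝ᵥ M *ᵥ (a * x) = ∑ i, ∑ j, (a * x) i * M i j * (a * x) j := by
    simp only [dotProduct, mulVec, Finset.mul_sum]
    exact Finset.sum_congr rfl fun i _ => Finset.sum_congr rfl fun j _ => by ring
  rw [hform, hexpand, hswap, hdiag]
  ring

lemma mul_mul_mul_sub_sq_nonneg (hoff : ∀ i j, i ≠ j → 0 ≤ M i j) {a : ι → ℝ}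
    (ha : ∀ i, 0 < a i) (x : ι → ℝ) (i j : ι) :
    0 ≤ a i * M i j * a j * (x i - x j) ^ 2 := by
  obtain rfl | hij := eq_or_ne i j
  · simp
  · have := hoff i j hij
    have := ha i
    have := ha j
    positivity

lemma eq_of_adj_of_sum_mul_sub_sq_eq_zero [Fintype ι] (hoff : ∀ i j, i ≠ j → 0 ≤ M i j)
    {a : ι → ℝ} (ha : ∀ i, 0 < a i) {x : ι → ℝ}
    (hx : ∑ i, ∑ j, a i * M i j * a j * (x i - x j) ^ 2 = 0) {i j : ι}
    (hij : (SimpleGraph.fromRel fun i j => 0 < M i j).Adj i j) : x i = x j := by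
  have hterm : ∀ k l, a k * M k l * a l * (x k - x l) ^ 2 = 0 := by
    intro k l
    have hrow := (Finset.sum_eq_zero_iff_of_nonneg fun k _ => Finset.sum_nonneg
      fun l _ => mul_mul_mul_sub_sq_nonneg hoff ha x k l).1 hx k (Finset.mem_univ k)
    exact (Finset.sum_eq_zero_iff_of_nonneg fun l _ =>
      mul_mul_mul_sub_sq_nonneg hoff ha x k l).1 hrow l (Finset.mem_univ l)
  have hweight : ∀ k l, 0 < M k l → x k = x l := by
    intro k l hkl
    have hw : a k * M k l * a l ≠ 0 := (mul_pos (mul_pos (ha k) hkl) (ha l)).ne'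
    simpa [hw, sub_eq_zero] using hterm k l
  rcases (SimpleGraph.fromRel_adj _ _ _).1 hij with ⟨-, h | h⟩
  · exact hweight i j h
  · exact (hweight j i h).symm

end GroundState

theorem stmt14_general (n : ℕ) (M : Matrix (Fin n) (Fin n) ℝ)
    (hsymm : M.IsSymm)
    (hoff : ∀ i j : Fin n, i ≠ j → 0 ≤ M i j)
    (a : Fin n → ℝ) (ha : ∀ i, 0 < a i)
    (hMa : ∀ i, M.mulVec a i ≤ 0)
    (i₀ : Fin n) (hMa0 : M.mulVec a i₀ < 0)
    (hconn : (SimpleGraph.fromRel (fun i j : Fin n => 0 < M i j)).Connected) :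
    ∀ y : Fin n → ℝ, y ≠ 0 → y ⬝ᵥ M.mulVec y < 0 := by
  intro y hy
  set x := y / a
  have hyx : y = a * x := funext fun i => (mul_div_cancel₀ (y i) (ha i).ne').symm
  have hdiag : ∀ i, a i * (M *ᵥ a) i * x i ^ 2 ≤ 0 := fun i =>
    mul_nonpos_of_nonpos_of_nonneg (mul_nonpos_of_nonneg_of_nonpos (ha i).le (hMa i)) (sq_nonneg _)
  have hdiag_sum := Finset.sum_nonpos fun i (_ : i ∈ Finset.univ) => hdiag i
  have hedge_sum := Finset.sum_nonneg fun i (_ : i ∈ Finset.univ) => Finset.sum_nonneg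
    fun j (_ : j ∈ Finset.univ) => mul_mul_mul_sub_sq_nonneg hoff ha x i j
  rw [hyx, dotProduct_mulVec_mul_eq_sub hsymm]
  by_contra! hQ
  have hconst : ∀ i, x i = x i₀ := fun i => (hconn.preconnected i i₀).eq_of_forall_adj
    fun _ _ => eq_of_adj_of_sum_mul_sub_sq_eq_zero hoff ha (by linarith)
  have hx₀ : x i₀ = 0 := by
    have := (Finset.sum_eq_zero_iff_of_nonpos fun i _ => hdiag i).1 (by linarith) i₀
      (Finset.mem_univ _)
    simpa [(mul_neg_of_pos_of_neg (ha i₀) hMa0).ne] using this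
  exact hy (by rw [hyx]; ext i; simp [hconst i, hx₀])

/-- The Du Val–Mumford negative definiteness criterion for symmetric matrices with
nonnegative off-diagonal entries, connected associated graph, and a positive vector
with nonpositive image, negative somewhere. -/
theorem stmt14 (n : ℕ) (hn : 1 ≤ n) (M : Matrix (Fin n) (Fin n) ℝ)
    (hsymm : M.IsSymm)
    (hoff : ∀ i j : Fin n, i ≠ j → 0 ≤ M i j)
    (a : Fin n → ℝ) (ha : ∀ i, 0 < a i)
    (hMa : ∀ i, M.mulVec a i ≤ 0)
    (i₀ : Fin n) (hMa0 : M.mulVec a i₀ < 0)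
    (hconn : (SimpleGraph.fromRel (fun i j : Fin n => 0 < M i j)).Connected) :
    ∀ y : Fin n → ℝ, y ≠ 0 → y ⬝ᵥ M.mulVec y < 0 :=
  stmt14_general n M hsymm hoff a ha hMa i₀ hMa0 hconn
end

section
/- Let n ≥ 1 and let M be a symmetric real n×n matrix which is negative definite (yᵀ M y < 0 for all y ≠ 0) and has nonnegative off-diagonal entries (M i j ≥ 0 for i ≠ j). Then M is invertible and all entries of the matrix N := -(M⁻¹) are nonnegative: N i j ≥ 0 for all i, j. -/
/-!
Write `x = x⁺ - x⁻` for a column `x` of `M⁻¹`, so that `M x` is a standard basis vector.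
Since `x⁺` and `x⁻` have disjoint supports and the off-diagonal entries of `M` are nonnegative,
`x⁺ᵀ M x⁻ ≥ 0`, hence `x⁺ᵀ M x⁺ ≥ x⁺ᵀ M x ≥ 0`. Negative definiteness forces `x⁺ = 0`,
i.e. every entry of `M⁻¹` is nonpositive.
-/

open Matrix

namespace Matrix

variable {ι R : Type*} [Fintype ι]

section OrderedRing

variable [CommRing R] [LinearOrder R] [IsOrderedRing R] {M : Matrix ι ι R}

theorem dotProduct_mulVec_nonneg_of_mul_eq_zero (hoff : ∀ i j, i ≠ j → 0 ≤ M i j)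
    {p q : ι → R} (hp : 0 ≤ p) (hq : 0 ≤ q) (hpq : ∀ i, p i * q i = 0) :
    0 ≤ p ⬝ᵥ M *ᵥ q := by
  simp only [dotProduct, mulVec, Finset.mul_sum]
  refine Finset.sum_nonneg fun i _ => Finset.sum_nonneg fun j _ => ?_
  rcases eq_or_ne i j with rfl | hij
  · rw [mul_left_comm, hpq, mul_zero]
  · exact mul_nonneg (hp i) (mul_nonneg (hoff i j hij) (hq j))

theorem dotProduct_mulVec_posPart_le (hoff : ∀ i j, i ≠ j → 0 ≤ M i j) (x : ι → R) :
    x⁺ ⬝ᵥ M *ᵥ x ≤ x⁺ ⬝ᵥ M *ᵥ x⁺ := by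
  have hdisj : ∀ i, x⁺ i * x⁻ i = 0 := fun i => by
    rcases le_total (x i) 0 with h | h
    · simp [posPart_eq_zero.2 h]
    · simp [negPart_eq_zero.2 h]
  have hcross := dotProduct_mulVec_nonneg_of_mul_eq_zero hoff (posPart_nonneg x)
    (negPart_nonneg x) hdisj
  calc x⁺ ⬝ᵥ M *ᵥ x = x⁺ ⬝ᵥ M *ᵥ x⁺ - x⁺ ⬝ᵥ M *ᵥ x⁻ := by
        rw [← dotProduct_sub, ← mulVec_sub, posPart_sub_negPart]
    _ ≤ x⁺ ⬝ᵥ M *ᵥ x⁺ := sub_le_self _ hcross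

theorem nonpos_of_mulVec_nonneg (hneg : ∀ y, y ≠ 0 → y ⬝ᵥ M *ᵥ y < 0)
    (hoff : ∀ i j, i ≠ j → 0 ≤ M i j) {x : ι → R} (hx : 0 ≤ M *ᵥ x) : x ≤ 0 := by
  rw [← posPart_eq_zero]
  by_contra hpos
  have hpair : 0 ≤ x⁺ ⬝ᵥ M *ᵥ x :=
    Finset.sum_nonneg fun i _ => mul_nonneg (posPart_nonneg x i) (hx i)
  exact (hneg _ hpos).not_ge (hpair.trans (dotProduct_mulVec_posPart_le hoff x))

end OrderedRing

section Field

variable [DecidableEq ι] [Field R] [LinearOrder R] {M : Matrix ι ι R}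

theorem det_ne_zero_of_dotProduct_mulVec_neg (hneg : ∀ y, y ≠ 0 → y ⬝ᵥ M *ᵥ y < 0) :
    M.det ≠ 0 := by
  intro h
  obtain ⟨v, hv, hMv⟩ := exists_mulVec_eq_zero_iff.2 h
  simpa [hMv] using hneg v hv

theorem inv_apply_nonpos [IsOrderedRing R] (hneg : ∀ y, y ≠ 0 → y ⬝ᵥ M *ᵥ y < 0)
    (hoff : ∀ i j, i ≠ j → 0 ≤ M i j) (i j : ι) : M⁻¹ i j ≤ 0 := by
  have hunit : IsUnit M.det := (det_ne_zero_of_dotProduct_mulVec_neg hneg).isUnit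
  have hcol : M *ᵥ M⁻¹.col j = Pi.single j 1 := by
    rw [← mulVec_single_one, mulVec_mulVec, mul_nonsing_inv M hunit, one_mulVec]
  exact nonpos_of_mulVec_nonneg hneg hoff (hcol ▸ Pi.single_nonneg.2 zero_le_one) i

end Field

end Matrix

theorem stmt16_general (n : ℕ) (M : Matrix (Fin n) (Fin n) ℝ)
    (hnegdef : ∀ y : Fin n → ℝ, y ≠ 0 → y ⬝ᵥ M.mulVec y < 0)
    (hoff : ∀ i j : Fin n, i ≠ j → 0 ≤ M i j) :
    IsUnit M.det ∧ ∀ i j : Fin n, 0 ≤ (-(M⁻¹)) i j :=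
  ⟨(det_ne_zero_of_dotProduct_mulVec_neg hnegdef).isUnit,
    fun i j => neg_nonneg.2 (inv_apply_nonpos hnegdef hoff i j)⟩

/-- A negative definite symmetric matrix with nonnegative off-diagonal entries is
invertible, and the entries of the opposite of its inverse are all nonnegative. -/
theorem stmt16 (n : ℕ) (hn : 1 ≤ n) (M : Matrix (Fin n) (Fin n) ℝ)
    (hsymm : M.IsSymm)
    (hnegdef : ∀ y : Fin n → ℝ, y ≠ 0 → y ⬝ᵥ M.mulVec y < 0)
    (hoff : ∀ i j : Fin n, i ≠ j → 0 ≤ M i j) :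
    IsUnit M.det ∧ ∀ i j : Fin n, 0 ≤ (-(M⁻¹)) i j :=
  stmt16_general n M hnegdef hoff
end

section
/- Let n ≥ 1 and let M be a symmetric real n×n matrix which is negative definite, has nonnegative off-diagonal entries (M i j ≥ 0 for i ≠ j), and whose associated graph G (indices i, j adjacent iff i ≠ j and M i j > 0) is connected. Set N := -(M⁻¹). Then for all indices a, b, c: N a b · N b c ≤ N b b · N a c, with equality if and only if b separates a from c in G, i.e., every walk in G from a to c passes through b. -/
open Matrix

/-- The Gignac–Ruggiero inequality `⟨a,b⟩⟨b,c⟩ ≤ ⟨b,b⟩⟨a,c⟩` for the brackets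
`⟨i,j⟩ = -(M⁻¹) i j` coming from a negative definite symmetric matrix `M` with
nonnegative off-diagonal entries and connected associated graph, with equality iff
`b` separates `a` from `c` in the graph. -/
theorem stmt17 (n : ℕ) (hn : 1 ≤ n) (M : Matrix (Fin n) (Fin n) ℝ)
    (hsymm : M.IsSymm)
    (hnegdef : ∀ y : Fin n → ℝ, y ≠ 0 → y ⬝ᵥ M.mulVec y < 0)
    (hoff : ∀ i j : Fin n, i ≠ j → 0 ≤ M i j)
    (hconn : (SimpleGraph.fromRel (fun i j : Fin n => 0 < M i j)).Connected) :
    ∀ a b c : Fin n,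
      (-(M⁻¹)) a b * (-(M⁻¹)) b c ≤ (-(M⁻¹)) b b * (-(M⁻¹)) a c ∧
      ((-(M⁻¹)) a b * (-(M⁻¹)) b c = (-(M⁻¹)) b b * (-(M⁻¹)) a c ↔
        ∀ p : (SimpleGraph.fromRel (fun i j : Fin n => 0 < M i j)).Walk a c,
          b ∈ p.support) := by
  classical
  have hMsym : ∀ i j, M i j = M j i := fun i j => hsymm.apply j i
  set G := SimpleGraph.fromRel (fun i j : Fin n => 0 < M i j) with hG
  have hGadj : ∀ i j, G.Adj i j ↔ (i ≠ j ∧ 0 < M i j) := by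
    intro i j
    rw [hG, SimpleGraph.fromRel_adj]
    constructor
    · rintro ⟨hne, h | h⟩
      · exact ⟨hne, h⟩
      · exact ⟨hne, (hMsym i j) ▸ h⟩
    · rintro ⟨hne, h⟩; exact ⟨hne, Or.inl h⟩
  set A : Matrix (Fin n) (Fin n) ℝ := -M with hAdef
  have hAapp : ∀ i j, A i j = -(M i j) := fun i j => rfl
  have hq : ∀ x : Fin n → ℝ, x ≠ 0 → 0 < x ⬝ᵥ A *ᵥ x := by
    intro x hx
    have h1 := hnegdef x hx
    rw [hAdef, Matrix.neg_mulVec, dotProduct_neg]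
    linarith
  have hApd : A.PosDef := by
    refine Matrix.PosDef.of_dotProduct_mulVec_pos ?_ ?_
    · show Aᴴ = A
      ext i j
      simp only [conjTranspose_apply, star_trivial]
      rw [hAapp, hAapp, hMsym j i]
    · intro x hx
      simpa using hq x hx
  have hAdet : IsUnit A.det := hApd.det_pos.ne'.isUnit
  set N := A⁻¹ with hNdef
  have hAN : A * N = 1 := A.mul_nonsing_inv hAdet
  have hNM : -(M⁻¹) = N := by
    have h2 : M * (-N) = 1 := by
      have h3 := hAN
      rw [hAdef] at h3
      rw [Matrix.mul_neg, ← Matrix.neg_mul]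
      exact h3
    rw [Matrix.inv_eq_right_inv h2, neg_neg]
  have hNpd : N.PosDef := hApd.inv
  have hqN : ∀ x : Fin n → ℝ, x ≠ 0 → 0 < x ⬝ᵥ N *ᵥ x := fun x hx => by
    simpa using hNpd.dotProduct_mulVec_pos hx
  have hNs : ∀ i j, N i j = N j i := fun i j => by
    have h := hNpd.1.apply i j
    simpa using h.symm
  have hNdiag : ∀ b, 0 < N b b := by
    intro b
    have hx : (Pi.single b 1 : Fin n → ℝ) ≠ 0 := by
      intro h
      have := congrFun h b
      simp at this
    have := hqN _ hx
    simpa using this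
  have hCS : ∀ b c, b ≠ c → N b c * N b c < N b b * N c c := by
    intro b c hbc
    have hxne : (Pi.single b (N b c) + Pi.single c (-(N b b)) : Fin n → ℝ) ≠ 0 := by
      intro h
      have := congrFun h c
      simp [Pi.single_eq_of_ne (Ne.symm hbc)] at this
      exact (hNdiag b).ne' this
    have h0 := hqN _ hxne
    rw [Matrix.mulVec_add] at h0
    simp only [Matrix.mulVec_single, add_dotProduct, dotProduct_single,
      single_dotProduct, Pi.add_apply, Pi.smul_apply, op_smul_eq_mul, Matrix.col_apply] at h0
    rw [hNs c b] at h0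
    nlinarith [hNdiag b]
  have hmv : ∀ (B : Matrix (Fin n) (Fin n) ℝ) (v : Fin n → ℝ) (i : Fin n),
      (B *ᵥ v) i = ∑ j, B i j * v j := fun B v i => rfl
  have hdp : ∀ (u v : Fin n → ℝ), u ⬝ᵥ v = ∑ i, u i * v i := fun u v => rfl
  intro a b c
  set w : Fin n → ℝ := fun i => N i b * N b c - N b b * N i c with hw
  set y : Fin n → ℝ := Pi.single b (N b c) - Pi.single c (N b b) with hy
  have hwN : w = N *ᵥ y := by
    funext i
    rw [hw, hy, Matrix.mulVec_sub]
    simp only [Pi.sub_apply, Matrix.mulVec_single, Pi.smul_apply, op_smul_eq_mul, Matrix.col_apply]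
    ring
  have hAw : A *ᵥ w = y := by
    rw [hwN, Matrix.mulVec_mulVec, hAN, Matrix.one_mulVec]
  have hwb : w b = 0 := by simp [hw]
  have hwc_lt : b ≠ c → w c < 0 := by
    intro hbc
    have h1 := hCS b c hbc
    simp only [hw]
    rw [hNs c b]
    nlinarith
  have hwc : w c ≤ 0 := by
    rcases eq_or_ne b c with rfl | hbc
    · simp [hw]
    · exact (hwc_lt hbc).le
  -- Step 1: w ≤ 0 everywhere
  have hwle : ∀ i, w i ≤ 0 := by
    set p : Fin n → ℝ := fun i => max (w i) 0 with hp
    set m : Fin n → ℝ := fun i => max (-(w i)) 0 with hm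
    have hpm : ∀ i, w i + m i = p i := by
      intro i
      simp only [hp, hm]
      rcases le_total (w i) 0 with h | h
      · rw [max_eq_right h, max_eq_left (by linarith)]; ring
      · rw [max_eq_left h, max_eq_right (by linarith)]; ring
    have hp0 : ∀ i, 0 ≤ p i := fun i => le_max_right _ _
    have hm0 : ∀ i, 0 ≤ m i := fun i => le_max_right _ _
    have hpmzero : ∀ i, p i * m i = 0 := by
      intro i
      simp only [hp, hm]
      rcases le_total (w i) 0 with h | h
      · rw [max_eq_right h]; ring
      · rw [max_eq_right (by linarith : -(w i) ≤ 0)]; ring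
    have hAp : p ⬝ᵥ A *ᵥ p ≤ 0 := by
      have hsplit : A *ᵥ p = A *ᵥ w + A *ᵥ m := by
        rw [← Matrix.mulVec_add]
        have hpwm : p = w + m := funext fun i => (hpm i).symm
        rw [hpwm]
      rw [hsplit, dotProduct_add, hAw]
      have h1 : p ⬝ᵥ y = 0 := by
        rw [hy, dotProduct_sub]
        simp only [dotProduct_single]
        have hpb : p b = 0 := by simp [hp, hwb]
        have hpc : p c = 0 := by simp only [hp]; exact max_eq_right hwc
        rw [hpb, hpc]; ring
      have h2 : p ⬝ᵥ A *ᵥ m ≤ 0 := by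
        rw [hdp]
        apply Finset.sum_nonpos
        intro i _
        rw [hmv, Finset.mul_sum]
        apply Finset.sum_nonpos
        intro j _
        rcases eq_or_ne i j with rfl | hij
        · rw [show p i * (A i i * m i) = A i i * (p i * m i) by ring, hpmzero i,
            mul_zero]
        · have hA0 : A i j ≤ 0 := by
            rw [hAapp]
            have := hoff i j hij
            linarith
          nlinarith [mul_nonneg (hp0 i) (hm0 j)]
      linarith
    intro i
    by_contra hcon
    push_neg at hcon
    have hpne : p ≠ 0 := by
      intro h
      have := congrFun h i
      simp only [hp, Pi.zero_apply] at this
      rw [max_eq_left hcon.le] at this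
      exact hcon.ne' this
    exact absurd hAp (not_le.mpr (hq p hpne))
  -- propagation lemma
  have hwprop : ∀ i, i ≠ b → i ≠ c → w i = 0 → ∀ j, G.Adj i j → w j = 0 := by
    intro i hib hic hwi j hij
    have h1 : (A *ᵥ w) i = 0 := by
      rw [hAw, hy]
      simp [Pi.single_eq_of_ne hib, Pi.single_eq_of_ne hic]
    rw [hmv] at h1
    have hterm : ∀ k ∈ Finset.univ, 0 ≤ A i k * w k := by
      intro k _
      rcases eq_or_ne k i with rfl | hki
      · rw [hwi, mul_zero]
      · have hA0 : A i k ≤ 0 := by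
          rw [hAapp]
          have := hoff i k (Ne.symm hki)
          linarith
        nlinarith [hwle k]
    have hall := (Finset.sum_eq_zero_iff_of_nonneg hterm).mp h1
    have hj := hall j (Finset.mem_univ j)
    have hadj := (hGadj i j).mp hij
    have hAne : A i j ≠ 0 := by
      rw [hAapp]
      exact neg_ne_zero.mpr hadj.2.ne'
    rcases mul_eq_zero.mp hj with h | h
    · exact absurd h hAne
    · exact h
  -- forward: equality implies separation
  have key : ∀ (x e : Fin n) (q : G.Walk x e), e = c → w x = 0 → b ∈ q.support := by
    intro x e q
    induction q with
    | @nil u =>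
      intro hec hwx
      rcases eq_or_ne b c with hbc | hbc
      · simp only [SimpleGraph.Walk.support_nil, List.mem_singleton]
        exact hbc.trans hec.symm
      · exact absurd (hec ▸ hwx) (hwc_lt hbc).ne
    | @cons u v e' h q ih =>
      intro hec hwx
      by_cases hub : u = b
      · rw [SimpleGraph.Walk.support_cons, ← hub]
        exact List.mem_cons_self
      · by_cases huc : u = c
        · exfalso
          have hbc : b ≠ c := fun hbc => hub (huc.trans hbc.symm)
          exact (hwc_lt hbc).ne (huc ▸ hwx)
        · have hwd := hwprop u hub huc hwx _ h
          rw [SimpleGraph.Walk.support_cons]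
          exact List.mem_cons_of_mem _ (ih hec hwd)
  -- backward: separation implies equality
  have hback : (∀ q : G.Walk a c, b ∈ q.support) → w a = 0 := by
    intro hsep
    rcases eq_or_ne b a with hba | hba
    · show N a b * N b c - N b b * N a c = 0
      rw [← hba]; ring
    rcases eq_or_ne b c with hbc | hbc
    · show N a b * N b c - N b b * N a c = 0
      rw [hbc]; ring
    set S : Set (Fin n) := {i | ∃ q : G.Walk a i, b ∉ q.support} with hS
    have haS : a ∈ S := ⟨SimpleGraph.Walk.nil, by simpa using hba⟩
    have hbS : b ∉ S := by
      rintro ⟨q, hq'⟩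
      exact hq' q.end_mem_support
    have hcS : c ∉ S := by
      rintro ⟨q, hq'⟩
      exact hq' (hsep q)
    have hSclosed : ∀ i, i ∈ S → ∀ j, G.Adj i j → j ≠ b → j ∈ S := by
      rintro i ⟨q, hq'⟩ j hij hjb
      refine ⟨q.concat hij, ?_⟩
      rw [SimpleGraph.Walk.support_concat]
      simp only [List.concat_eq_append, List.mem_append, List.mem_singleton]
      rintro (h | h)
      · exact hq' h
      · exact hjb h.symm
    set z : Fin n → ℝ := fun i => if i ∈ S then w i else 0 with hz
    have hzi : ∀ i ∈ S, (A *ᵥ z) i = 0 := by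
      intro i hiS
      have hib : i ≠ b := fun h => hbS (h ▸ hiS)
      have hic : i ≠ c := fun h => hcS (h ▸ hiS)
      have h1 : (∑ j, A i j * z j) = ∑ j, A i j * w j := by
        apply Finset.sum_congr rfl
        intro j _
        by_cases hjS : j ∈ S
        · simp [hz, hjS]
        · simp only [hz, hjS, if_false, mul_zero]
          rcases eq_or_ne j b with hjb | hjb
          · rw [hjb, hwb, mul_zero]
          · have hij : ¬ G.Adj i j := fun hadj => hjS (hSclosed i hiS j hadj hjb)
            have hji : i ≠ j := fun h => hjS (h ▸ hiS)
            have hnpos : ¬ (0 < M i j) := fun hpos => hij ((hGadj i j).mpr ⟨hji, hpos⟩)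
            have hM0 : M i j = 0 := le_antisymm (not_lt.mp hnpos) (hoff i j hji)
            rw [hAapp, hM0]; ring
      have h2 : (A *ᵥ w) i = 0 := by
        rw [hAw, hy]
        simp [Pi.single_eq_of_ne hib, Pi.single_eq_of_ne hic]
      rw [hmv, h1, ← hmv A w i]
      exact h2
    have hz0 : z = 0 := by
      by_contra hzne
      have hpos := hq z hzne
      have hzero : z ⬝ᵥ A *ᵥ z = 0 := by
        rw [hdp]
        apply Finset.sum_eq_zero
        intro i _
        by_cases hiS : i ∈ S
        · rw [hzi i hiS, mul_zero]
        · simp [hz, hiS]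
      rw [hzero] at hpos
      exact lt_irrefl 0 hpos
    have hza : z a = 0 := by rw [hz0]; rfl
    simp only [hz, haS, if_true] at hza
    exact hza
  rw [hNM]
  constructor
  · have := hwle a
    simp only [hw] at this
    linarith
  · constructor
    · intro he
      intro p
      exact key a c p rfl (by simp only [hw]; linarith)
    · intro hs
      have := hback hs
      simp only [hw] at this
      linarith
end

section
/- Let n ≥ 1 and let M be a symmetric real n×n matrix which is negative definite, has nonnegative off-diagonal entries (M i j ≥ 0 for i ≠ j), and whose associated graph G (indices i, j adjacent iff i ≠ j and M i j > 0) is connected. Set N := -(M⁻¹) and define ρ(a,b) := -log( N a b ² / (N a a · N b b) ) for a ≠ b and ρ(a,a) := 0. Then: (i) N a b > 0 for all a, b, so ρ is well-defined; (ii) ρ is a distance on the index set: ρ(a,b) ≥ 0 with ρ(a,b) = 0 iff a = b, ρ(a,b) = ρ(b,a), and ρ(a,c) ≤ ρ(a,b) + ρ(b,c); (iii) for all a, b, c, the equality ρ(a,b) + ρ(b,c) = ρ(a,c) holds if and only if b separates a from c in G, i.e., every walk in G from a to c passes through b. -/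
open Matrix

private lemma aux_dot {n : ℕ} (A : Matrix (Fin n) (Fin n) ℝ) (v w : Fin n → ℝ) :
    v ⬝ᵥ A.mulVec w = ∑ i, ∑ j, v i * (A i j * w j) := by
  simp [dotProduct, Matrix.mulVec, Finset.mul_sum]

private lemma aux_eval {n : ℕ} (N : Matrix (Fin n) (Fin n) ℝ) (a b : Fin n) (s t : ℝ) :
    (s • (Pi.single a 1 : Fin n → ℝ) + t • (Pi.single b 1 : Fin n → ℝ)) ⬝ᵥ
      N.mulVec (s • (Pi.single a 1 : Fin n → ℝ) + t • (Pi.single b 1 : Fin n → ℝ))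
      = s*s*N a a + s*t*N a b + t*s*N b a + t*t*N b b := by
  simp [Matrix.mulVec_add, Matrix.mulVec_smul, Matrix.mulVec_single,
    add_dotProduct, smul_dotProduct, dotProduct_add,
    dotProduct_smul, single_dotProduct, smul_eq_mul]
  ring

private lemma aux_nonneg {n : ℕ} {A : Matrix (Fin n) (Fin n) ℝ}
    (hA : A.PosDef) (hoff : ∀ i j, i ≠ j → A i j ≤ 0)
    (x : Fin n → ℝ) (hx : ∀ i, x i < 0 → 0 ≤ A.mulVec x i) : ∀ i, 0 ≤ x i := by
  by_contra hcon
  push_neg at hcon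
  obtain ⟨i0, hi0⟩ := hcon
  set q : Fin n → ℝ := fun i => max (-(x i)) 0 with hqdef
  set p : Fin n → ℝ := fun i => max (x i) 0 with hpdef
  have hq0 : ∀ i, 0 ≤ q i := fun i => le_max_right _ _
  have hp0 : ∀ i, 0 ≤ p i := fun i => le_max_right _ _
  have hpq : x = p - q := by
    funext i
    simp only [hpdef, hqdef, Pi.sub_apply]
    rcases le_total (x i) 0 with h' | h'
    · rw [max_eq_right h', max_eq_left (by linarith)]; ring
    · rw [max_eq_left h', max_eq_right (by linarith)]; ring
  have hqp : ∀ i, q i * p i = 0 := by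
    intro i
    rcases le_total (x i) 0 with h' | h'
    · simp only [hpdef]; rw [max_eq_right h', mul_zero]
    · simp only [hqdef]; rw [max_eq_right (by linarith), zero_mul]
  have hqx : ∀ i, q i ≠ 0 → x i < 0 := by
    intro i hi
    by_contra h'
    push_neg at h'
    exact hi (by simp only [hqdef]; rw [max_eq_right (by linarith)])
  -- q ⬝ᵥ A x ≥ 0
  have h1 : 0 ≤ q ⬝ᵥ A.mulVec x := by
    apply Finset.sum_nonneg
    intro i _
    rcases eq_or_ne (q i) 0 with h | h
    · simp [h]
    · exact mul_nonneg (hq0 i) (hx i (hqx i h))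
  -- q ⬝ᵥ A p ≤ 0
  have h2 : q ⬝ᵥ A.mulVec p ≤ 0 := by
    rw [aux_dot]
    apply Finset.sum_nonpos
    intro i _
    apply Finset.sum_nonpos
    intro j _
    rcases eq_or_ne i j with h | h
    · subst h
      have : q i * (A i i * p i) = A i i * (q i * p i) := by ring
      rw [this, hqp i, mul_zero]
    · exact mul_nonpos_of_nonneg_of_nonpos (hq0 i)
        (mul_nonpos_of_nonpos_of_nonneg (hoff i j h) (hp0 j))
  have h3 : q ⬝ᵥ A.mulVec x = q ⬝ᵥ A.mulVec p - q ⬝ᵥ A.mulVec q := by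
    rw [hpq, Matrix.mulVec_sub, dotProduct_sub]
  have hq4 : q ⬝ᵥ A.mulVec q ≤ 0 := by linarith
  have hqne : q ≠ 0 := by
    intro h
    have : q i0 = 0 := by rw [h]; rfl
    simp only [hqdef] at this
    rw [max_eq_left (by linarith)] at this
    linarith
  have := hA.dotProduct_mulVec_pos hqne
  simp only [star_trivial] at this
  -- this : 0 < q ⬝ᵥ A *ᵥ q
  linarith

private lemma aux_step {n : ℕ} {A : Matrix (Fin n) (Fin n) ℝ}
    (hoff : ∀ i j, i ≠ j → A i j ≤ 0)
    (x : Fin n → ℝ) (hx : ∀ i, 0 ≤ x i) (j : Fin n)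
    (hAxj : 0 ≤ A.mulVec x j) (hxj : x j = 0)
    (i : Fin n) (hAij : A j i < 0) : x i = 0 := by
  have hsum : A.mulVec x j = ∑ k, A j k * x k := by
    simp [Matrix.mulVec, dotProduct]
  have hterms : ∀ k ∈ Finset.univ, A j k * x k ≤ 0 := by
    intro k _
    rcases eq_or_ne k j with h | h
    · subst h; rw [hxj, mul_zero]
    · exact mul_nonpos_of_nonpos_of_nonneg (hoff j k (Ne.symm h)) (hx k)
  have hsum0 : ∑ k, A j k * x k = 0 :=
    le_antisymm (Finset.sum_nonpos hterms) (by rw [← hsum]; exact hAxj)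
  have := (Finset.sum_eq_zero_iff_of_nonpos hterms).mp hsum0 i (Finset.mem_univ i)
  rcases mul_eq_zero.mp this with h | h
  · exact absurd h hAij.ne
  · exact h


/-- The angular distance `ρ(a,b) = -log(⟨a,b⟩² / (⟨a,a⟩⟨b,b⟩))` associated to the
brackets `⟨i,j⟩ = -(M⁻¹) i j` of a negative definite symmetric matrix `M` with
nonnegative off-diagonal entries and connected associated graph is a well-defined
distance, and `ρ(a,b) + ρ(b,c) = ρ(a,c)` iff `b` separates `a` from `c` in the
graph. -/
theorem stmt18 (n : ℕ) (hn : 1 ≤ n) (M : Matrix (Fin n) (Fin n) ℝ)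
    (hsymm : M.IsSymm)
    (hnegdef : ∀ y : Fin n → ℝ, y ≠ 0 → y ⬝ᵥ M.mulVec y < 0)
    (hoff : ∀ i j : Fin n, i ≠ j → 0 ≤ M i j)
    (hconn : (SimpleGraph.fromRel (fun i j : Fin n => 0 < M i j)).Connected) :
    let N : Matrix (Fin n) (Fin n) ℝ := -(M⁻¹)
    let ρ : Fin n → Fin n → ℝ := fun a b =>
      if a = b then 0 else -Real.log (N a b ^ 2 / (N a a * N b b))
    (∀ a b : Fin n, 0 < N a b) ∧
    (∀ a b : Fin n, 0 ≤ ρ a b) ∧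
    (∀ a b : Fin n, ρ a b = 0 ↔ a = b) ∧
    (∀ a b : Fin n, ρ a b = ρ b a) ∧
    (∀ a b c : Fin n, ρ a c ≤ ρ a b + ρ b c) ∧
    (∀ a b c : Fin n,
      ρ a b + ρ b c = ρ a c ↔
        ∀ p : (SimpleGraph.fromRel (fun i j : Fin n => 0 < M i j)).Walk a c,
          b ∈ p.support) := by
  classical
  intro N ρ
  set G := SimpleGraph.fromRel (fun i j : Fin n => 0 < M i j) with hGdef
  set A : Matrix (Fin n) (Fin n) ℝ := -M with hAdef
  have hAoff : ∀ i j, i ≠ j → A i j ≤ 0 := by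
    intro i j hij
    simp only [hAdef, Matrix.neg_apply]
    linarith [hoff i j hij]
  have hA : A.PosDef := by
    refine Matrix.PosDef.of_dotProduct_mulVec_pos ?_ ?_
    · show Aᴴ = A
      have : Aᴴ = Aᵀ := rfl
      rw [this]
      simp only [hAdef, Matrix.transpose_neg, hsymm.eq]
    · intro x hx
      have := hnegdef x hx
      simp only [hAdef, Matrix.neg_mulVec, dotProduct_neg, star_trivial]
      linarith
  have hAdetU : IsUnit A.det := isUnit_iff_ne_zero.mpr (ne_of_gt hA.det_pos)
  have hMinv : M⁻¹ = -(A⁻¹) := by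
    apply Matrix.inv_eq_right_inv
    calc M * -A⁻¹ = -(M * A⁻¹) := by rw [mul_neg]
    _ = (-M) * A⁻¹ := by rw [neg_mul]
    _ = 1 := A.mul_nonsing_inv hAdetU
  have hNA : N = A⁻¹ := by
    show -(M⁻¹) = A⁻¹
    rw [hMinv, neg_neg]
  have hN : N.PosDef := by rw [hNA]; exact hA.inv
  have hAN : A * N = 1 := by rw [hNA]; exact A.mul_nonsing_inv hAdetU
  have hNsym : ∀ i j, N i j = N j i := by
    intro i j
    simpa using hN.1.apply j i
  have hAmul : ∀ v : Fin n → ℝ, A.mulVec (N.mulVec v) = v := by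
    intro v
    rw [Matrix.mulVec_mulVec, hAN, Matrix.one_mulVec]
  have hquad : ∀ y : Fin n → ℝ, 0 ≤ y ⬝ᵥ N.mulVec y := by
    intro y
    simpa using hN.posSemidef.dotProduct_mulVec_nonneg y
  have hdiag : ∀ a, 0 < N a a := by
    intro a
    have hne : (Pi.single a 1 : Fin n → ℝ) ≠ 0 := by
      intro h
      simpa using congrFun h a
    have h := hN.dotProduct_mulVec_pos hne
    simp only [star_trivial] at h
    simpa [Matrix.mulVec_single, single_dotProduct] using h
  have hcs : ∀ a b, N a b ^ 2 ≤ N a a * N b b := by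
    intro a b
    have key : ∀ t : ℝ, 0 ≤ N b b * (t * t) + (2 * N a b) * t + N a a := by
      intro t
      have h := hquad ((1:ℝ) • (Pi.single a 1 : Fin n → ℝ) + t • (Pi.single b 1 : Fin n → ℝ))
      rw [aux_eval] at h
      rw [hNsym b a] at h
      linarith
    have hd := discrim_le_zero key
    simp only [discrim] at hd
    nlinarith [hd]
  have hcs_lt : ∀ a b, a ≠ b → N a b ^ 2 < N a a * N b b := by
    intro a b hab
    set z : Fin n → ℝ := N b b • (Pi.single a 1 : Fin n → ℝ)
      + (-(N a b)) • (Pi.single b 1 : Fin n → ℝ) with hzdef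
    have hz : z ≠ 0 := by
      intro h
      have h2 := congrFun h a
      simp [hzdef, Pi.single_apply, hab] at h2
      have : N b b = 0 := by linarith [h2]
      linarith [hdiag b]
    have h := hN.dotProduct_mulVec_pos hz
    simp only [star_trivial] at h
    rw [hzdef, aux_eval, hNsym b a] at h
    nlinarith [hdiag b, h]
  have hcol : ∀ (b i : Fin n), A.mulVec (fun j => N j b) i = (if i = b then (1:ℝ) else 0) := by
    intro b i
    have hx : (fun j => N j b) = N.mulVec (Pi.single b 1) := by
      funext j
      simp [Matrix.mulVec_single]
    rw [hx, hAmul]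
    simp [Pi.single_apply]
  have hNnonneg : ∀ b j, 0 ≤ N j b := by
    intro b
    apply aux_nonneg hA hAoff
    intro i _
    rw [hcol]
    split <;> norm_num
  -- zero propagation along walks
  have hprop : ∀ (x : Fin n → ℝ), (∀ i, 0 ≤ x i) → ∀ (u v : Fin n) (p : G.Walk u v),
      (∀ j ∈ p.support, 0 ≤ A.mulVec x j) → x u = 0 → x v = 0 := by
    intro x hx u v p
    induction p with
    | nil => exact fun _ h => h
    | @cons u w v hadj q ih =>
      intro hsup h0
      have hadj' : A u w < 0 := by
        rw [hGdef, SimpleGraph.fromRel_adj] at hadj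
        obtain ⟨hne, hor⟩ := hadj
        have hM : 0 < M u w := by
          rcases hor with h | h
          · exact h
          · rwa [hsymm.apply u w] at h
        simp only [hAdef, Matrix.neg_apply]
        linarith
      have hw : x w = 0 := by
        apply aux_step hAoff x hx u _ h0 w hadj'
        exact hsup u (SimpleGraph.Walk.start_mem_support _)
      apply ih _ hw
      intro j hj
      exact hsup j (by rw [SimpleGraph.Walk.support_cons]; exact List.mem_cons_of_mem _ hj)
  have hpos : ∀ a b, 0 < N a b := by
    intro a b
    rcases (hNnonneg b a).lt_or_eq with h | h
    · exact h
    · exfalso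
      obtain ⟨p⟩ := hconn.preconnected a b
      have hzero := hprop (fun j => N j b) (hNnonneg b) a b p
        (fun j _ => by rw [hcol]; split <;> norm_num) h.symm
      linarith [hdiag b]
  have hkey : ∀ a b c : Fin n,
      0 ≤ N a c * N b b - N a b * N b c ∧
      (N a c * N b b - N a b * N b c = 0 ↔ ∀ p : G.Walk a c, b ∈ p.support) := by
    intro a b c
    set x : Fin n → ℝ := fun j => N j c * N b b - N j b * N b c with hxdef
    set w : Fin n → ℝ :=
      fun k => (if k = c then N b b else 0) - (if k = b then N b c else 0) with hwdef
    have hxw : x = N.mulVec w := by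
      funext j
      have hstep : N.mulVec w j = ∑ k, (N j k * (if k = c then N b b else 0)
          - N j k * (if k = b then N b c else 0)) := by
        simp only [Matrix.mulVec, dotProduct, hwdef]
        exact Finset.sum_congr rfl fun k _ => by ring
      rw [hstep, Finset.sum_sub_distrib]
      simp [mul_ite, mul_zero, Finset.sum_ite_eq', hxdef]
    have hAx : A.mulVec x = w := by rw [hxw, hAmul]
    have hxb : x b = 0 := by simp only [hxdef]; ring
    have hxnn : ∀ i, 0 ≤ x i := by
      apply aux_nonneg hA hAoff
      intro i hi
      rcases eq_or_ne i b with h | h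
      · exfalso
        rw [h, hxb] at hi
        exact lt_irrefl 0 hi
      · rw [hAx]
        simp only [hwdef, if_neg h, sub_zero]
        split
        · exact (hdiag b).le
        · exact le_rfl
    refine ⟨by simpa only [hxdef] using hxnn a, ?_, ?_⟩
    · -- x a = 0 → separation
      intro h0 p
      by_contra hbp
      have hbc : b ≠ c := fun h => hbp (h ▸ p.end_mem_support)
      have hxc : x c = 0 := by
        apply hprop x hxnn a c p _ (by simpa only [hxdef] using h0)
        intro j hj
        have hjb : j ≠ b := fun h => hbp (h ▸ hj)
        rw [hAx]
        simp only [hwdef, if_neg hjb, sub_zero]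
        split
        · exact (hdiag b).le
        · exact le_rfl
      have hlt := hcs_lt b c hbc
      simp only [hxdef] at hxc
      rw [hNsym c b] at hxc
      nlinarith [hlt, hxc]
    · -- separation → x a = 0
      intro hsep
      rcases eq_or_ne b a with hba | hba
      · rw [hba]; ring
      rcases eq_or_ne b c with hbc | hbc
      · rw [hbc]; ring
      set S : Fin n → Prop := fun j => ∃ p : G.Walk a j, b ∉ p.support with hSdef
      have hSa : S a := ⟨SimpleGraph.Walk.nil, by simpa [SimpleGraph.Walk.support_nil] using hba⟩
      have hSc : ¬ S c := fun ⟨p, hp⟩ => hp (hsep p)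
      have hSb : ¬ S b := fun ⟨p, hp⟩ => hp p.end_mem_support
      have hSclose : ∀ i j, S i → G.Adj i j → j ≠ b → S j := by
        rintro i j ⟨p, hp⟩ hadj hjb
        refine ⟨p.concat hadj, ?_⟩
        rw [SimpleGraph.Walk.support_concat]
        intro hmem
        rw [List.mem_append, List.mem_singleton] at hmem
        rcases hmem with h | h
        · exact hp h
        · exact hjb h.symm
      set y : Fin n → ℝ := fun i => if S i then x i else 0 with hydef
      have hyAx : ∀ i, y i * A.mulVec x i = 0 := by
        intro i
        by_cases hSi : S i
        · have hib : i ≠ b := fun h => hSb (h ▸ hSi)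
          have hic : i ≠ c := fun h => hSc (h ▸ hSi)
          rw [hAx]
          simp [hwdef, if_neg hib, if_neg hic]
        · simp [hydef, if_neg hSi]
      have hAxy : ∀ i, S i → A.mulVec x i = A.mulVec y i := by
        intro i hSi
        simp only [Matrix.mulVec, dotProduct]
        apply Finset.sum_congr rfl
        intro j _
        by_cases hSj : S j
        · simp [hydef, if_pos hSj]
        · simp only [hydef, if_neg hSj, mul_zero]
          rcases eq_or_ne (M i j) 0 with hM | hM
          · simp [hAdef, Matrix.neg_apply, hM]
          · have hij : i ≠ j := fun h => hSj (h ▸ hSi)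
            have hMpos : 0 < M i j := lt_of_le_of_ne (hoff i j hij) (Ne.symm hM)
            have hadj : G.Adj i j := by
              rw [hGdef, SimpleGraph.fromRel_adj]
              exact ⟨hij, Or.inl hMpos⟩
            have hjb : j = b := by
              by_contra h
              exact hSj (hSclose i j hSi hadj h)
            rw [hjb, hxb, mul_zero]
      have hyy : y ⬝ᵥ A.mulVec y = 0 := by
        calc y ⬝ᵥ A.mulVec y = ∑ i, y i * A.mulVec y i := rfl
        _ = ∑ i, y i * A.mulVec x i := by
            apply Finset.sum_congr rfl
            intro i _
            by_cases hSi : S i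
            · rw [hAxy i hSi]
            · simp [hydef, if_neg hSi]
        _ = 0 := Finset.sum_eq_zero (fun i _ => hyAx i)
      have hy0 : y = 0 := by
        by_contra hy
        have hpos' := hA.dotProduct_mulVec_pos hy
        simp only [star_trivial] at hpos'
        linarith [hyy, hpos']
      have hxa : x a = 0 := by
        have h' := congrFun hy0 a
        simp only [hydef, if_pos hSa, Pi.zero_apply] at h'
        exact h'
      simpa only [hxdef] using hxa
  have hrpos : ∀ a b, 0 < N a b ^ 2 / (N a a * N b b) :=
    fun a b => div_pos (pow_pos (hpos a b) 2) (mul_pos (hdiag a) (hdiag b))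
  have hrle : ∀ a b, N a b ^ 2 / (N a a * N b b) ≤ 1 :=
    fun a b => (div_le_one (mul_pos (hdiag a) (hdiag b))).mpr (hcs a b)
  have hρ : ∀ a b, ρ a b = -Real.log (N a b ^ 2 / (N a a * N b b)) := by
    intro a b
    show (if a = b then (0:ℝ) else -Real.log (N a b ^ 2 / (N a a * N b b))) = _
    rcases eq_or_ne a b with h | h
    · rw [if_pos h, h]
      rw [show N b b ^ 2 / (N b b * N b b) = 1 from by
        rw [sq]; exact div_self (mul_pos (hdiag b) (hdiag b)).ne']
      rw [Real.log_one, neg_zero]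
    · rw [if_neg h]
  have hlogsum : ∀ a b c : Fin n,
      -Real.log (N a b ^ 2 / (N a a * N b b)) + -Real.log (N b c ^ 2 / (N b b * N c c))
        = -Real.log ((N a b ^ 2 / (N a a * N b b)) * (N b c ^ 2 / (N b b * N c c))) := by
    intro a b c
    rw [Real.log_mul (hrpos a b).ne' (hrpos b c).ne']
    ring
  refine ⟨hpos, ?_, ?_, ?_, ?_, ?_⟩
  · intro a b
    rw [hρ, neg_nonneg]
    exact Real.log_nonpos (hrpos a b).le (hrle a b)
  · intro a b
    constructor
    · intro h
      by_contra hab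
      have h1 : N a b ^ 2 / (N a a * N b b) < 1 :=
        (div_lt_one (mul_pos (hdiag a) (hdiag b))).mpr (hcs_lt a b hab)
      have h2 := Real.log_neg (hrpos a b) h1
      rw [hρ] at h
      linarith
    · intro h
      rw [h]
      show (if b = b then (0:ℝ) else _) = 0
      rw [if_pos rfl]
  · intro a b
    rw [hρ, hρ, hNsym a b, mul_comm (N a a) (N b b)]
  · -- triangle inequality
    intro a b c
    rw [hρ a c, hρ a b, hρ b c, hlogsum a b c]
    apply neg_le_neg
    have hPQ := (hkey a b c).1
    have hP : 0 < N a b * N b c := mul_pos (hpos a b) (hpos b c)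
    have hle2 : (N a b * N b c) ^ 2 ≤ (N a c * N b b) ^ 2 :=
      pow_le_pow_left₀ hP.le (by linarith) 2
    have hle : (N a b ^ 2 / (N a a * N b b)) * (N b c ^ 2 / (N b b * N c c))
        ≤ N a c ^ 2 / (N a a * N c c) := by
      rw [div_mul_div_comm, div_le_div_iff₀
        (mul_pos (mul_pos (hdiag a) (hdiag b)) (mul_pos (hdiag b) (hdiag c)))
        (mul_pos (hdiag a) (hdiag c))]
      nlinarith [hle2, mul_pos (hdiag a) (hdiag c)]
    exact Real.log_le_log (mul_pos (hrpos a b) (hrpos b c)) hle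
  · -- equality case
    intro a b c
    rw [hρ a b, hρ b c, hρ a c, hlogsum a b c]
    have hiff1 : (-Real.log ((N a b ^ 2 / (N a a * N b b)) * (N b c ^ 2 / (N b b * N c c)))
        = -Real.log (N a c ^ 2 / (N a a * N c c)))
        ↔ (N a b ^ 2 / (N a a * N b b)) * (N b c ^ 2 / (N b b * N c c))
          = N a c ^ 2 / (N a a * N c c) := by
      constructor
      · intro h
        have h' : Real.log ((N a b ^ 2 / (N a a * N b b)) * (N b c ^ 2 / (N b b * N c c)))
            = Real.log (N a c ^ 2 / (N a a * N c c)) := by linarith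
        exact Real.log_injOn_pos
          (Set.mem_Ioi.mpr (mul_pos (hrpos a b) (hrpos b c)))
          (Set.mem_Ioi.mpr (hrpos a c)) h'
      · intro h; rw [h]
    have hiff2 : ((N a b ^ 2 / (N a a * N b b)) * (N b c ^ 2 / (N b b * N c c))
          = N a c ^ 2 / (N a a * N c c))
        ↔ N a b * N b c = N a c * N b b := by
      rw [div_mul_div_comm, div_eq_div_iff
        (mul_pos (mul_pos (hdiag a) (hdiag b)) (mul_pos (hdiag b) (hdiag c))).ne'
        (mul_pos (hdiag a) (hdiag c)).ne']
      constructor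
      · intro h
        have hac : (0:ℝ) < N a a * N c c := mul_pos (hdiag a) (hdiag c)
        have h2 : (N a b * N b c) ^ 2 * (N a a * N c c)
            = (N a c * N b b) ^ 2 * (N a a * N c c) := by linear_combination h
        have h3 : (N a b * N b c) ^ 2 = (N a c * N b b) ^ 2 :=
          mul_right_cancel₀ hac.ne' h2
        exact (pow_left_inj₀ (mul_pos (hpos a b) (hpos b c)).le
          (mul_pos (hpos a c) (hdiag b)).le two_ne_zero).mp h3
      · intro h
        have h3 : (N a b * N b c) ^ 2 = (N a c * N b b) ^ 2 := by rw [h]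
        linear_combination (N a a * N c c) * h3
    rw [hiff1, hiff2]
    have hiff3 : (N a b * N b c = N a c * N b b)
        ↔ N a c * N b b - N a b * N b c = 0 := by
      constructor <;> intro h <;> linarith
    rw [hiff3]
    exact (hkey a b c).2
end
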